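/- arXiv:1802.03209 — 5 statements merged into one kernel-verified Lean document; each statement's English description precedes it below -/
import Mathlib

section
/- Let (X_t)_{t≥0} be a sequence of real-valued random variables adapted to a filtration (F_t)_{t≥0} with X_0 = x_0 ∈ ℝ almost surely, and let β < x_0. Suppose there exist constants A, B > 0 such that the truncated process (Y^A_t) is integrable for every t (E[|Y^A_t|] < ∞) and almost surely E[max{X_{t+1} − X_t, −A} | F_t] ≤ −B for every t. Then the first hitting times satisfy E[T^X_β] ≤ E[T^{Y^A}_β] ≤ (x_0 − β + A)/B. -/
open MeasureTheory ProbabilityTheory Real Set Filter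
open scoped ENNReal ENat

/-- First hitting time of the set `(-∞, β]` by the process `X`, valued in `ℕ∞`. -/
noncomputable def hitTime {Ω : Type*} (X : ℕ → Ω → ℝ) (β : ℝ) (ω : Ω) : ℕ∞ :=
  ⨅ k : {k : ℕ // X k ω ≤ β}, (k : ℕ∞)

/-- Truncated process: `Y^A_0 = X_0` and `Y^A_{t+1} = Y^A_t + max (X_{t+1} - X_t) (-A)`. -/
noncomputable def truncY {Ω : Type*} (A : ℝ) (X : ℕ → Ω → ℝ) : ℕ → Ω → ℝ
  | 0 => X 0
  | (t+1) => fun ω => truncY A X t ω + max (X (t+1) ω - X t ω) (-A)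

/-!
Truncating the increments from below only raises them, so `X ≤ Y^A` pointwise and `X` enters
`(-∞, β]` no later than `Y^A`. For the bound, the drift condition makes `Y^A_t + B t` a
supermartingale. Before its hitting time `τ` the process stays above `β`, and it jumps down by at
most `A`, so `Y^A_{τ ∧ n} ≥ min x₀ (β - A)`. Optional stopping at `τ ∧ n` then gives
`B 𝔼[τ ∧ n] ≤ x₀ - min x₀ (β - A)`, and monotone convergence lets `n → ∞`.
-/

section

variable {Ω : Type*}

lemma le_truncY (A : ℝ) (X : ℕ → Ω → ℝ) (t : ℕ) (ω : Ω) : X t ω ≤ truncY A X t ω := by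
  induction t with
  | zero => rfl
  | succ t ih =>
    simp only [truncY]
    linarith [le_max_left (X (t + 1) ω - X t ω) (-A)]

lemma truncY_sub_le_succ (A : ℝ) (X : ℕ → Ω → ℝ) (t : ℕ) (ω : Ω) :
    truncY A X t ω - A ≤ truncY A X (t + 1) ω := by
  simp only [truncY]
  linarith [le_max_right (X (t + 1) ω - X t ω) (-A)]

lemma truncY_succ_sub (A : ℝ) (X : ℕ → Ω → ℝ) (t : ℕ) :
    truncY A X (t + 1) - truncY A X t = fun ω ↦ max (X (t + 1) ω - X t ω) (-A) := by
  funext ω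
  simp [truncY]

lemma hitTime_mono {X Y : ℕ → Ω → ℝ} (h : ∀ t ω, X t ω ≤ Y t ω) (β : ℝ) (ω : Ω) :
    hitTime X β ω ≤ hitTime Y β ω :=
  le_iInf fun k ↦ iInf_le_of_le ⟨k, (h k ω).trans k.2⟩ le_rfl

lemma hitTime_eq_hittingAfter (X : ℕ → Ω → ℝ) (β : ℝ) :
    hitTime X β = hittingAfter X (Iic β) 0 := by
  funext ω
  refine le_antisymm ?_ (le_iInf fun k ↦ hittingAfter_le_of_mem (Nat.zero_le _) k.2)
  by_cases h : hittingAfter X (Iic β) 0 ω = ⊤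
  · exact h ▸ le_top
  · have hmem := hittingAfter_mem_set_of_ne_top h
    lift hittingAfter X (Iic β) 0 ω to ℕ using h with i hi
    exact iInf_le_of_le ⟨i, hmem⟩ le_rfl

lemma min_le_of_sub_le_succ_of_forall_lt {y : ℕ → ℝ} {A β : ℝ} (hy : ∀ j, y j - A ≤ y (j + 1))
    {k : ℕ} (hk : ∀ j < k, β < y j) : min (y 0) (β - A) ≤ y k := by
  cases k with
  | zero => exact min_le_left _ _
  | succ j => linarith [min_le_right (y 0) (β - A), hy j, hk j j.lt_succ_self]

lemma lt_of_lt_hitTime {X : ℕ → Ω → ℝ} {β : ℝ} {ω : Ω} {j : ℕ}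
    (hj : (j : ℕ∞) < hitTime X β ω) : β < X j ω := by
  by_contra! hle
  exact hj.not_ge (iInf_le_of_le ⟨j, hle⟩ le_rfl)

lemma exists_eq_min_and_stoppedProcess_eq {β : Type*} (u : ℕ → Ω → β) (τ : Ω → ℕ∞) (n : ℕ)
    (ω : Ω) : ∃ k : ℕ, (k : ℕ∞) = min (n : ℕ∞) (τ ω) ∧ stoppedProcess u τ n ω = u k ω := by
  rcases le_total (n : ℕ∞) (τ ω) with h | h
  · exact ⟨n, (min_eq_left h).symm, stoppedProcess_eq_of_le h⟩
  · obtain ⟨k, hk⟩ := WithTop.ne_top_iff_exists.1 (ne_top_of_le_ne_top (ENat.natCast_ne_top n) h)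
    refine ⟨k, ((min_eq_right h).trans hk.symm).symm, (stoppedProcess_eq_of_ge h).trans ?_⟩
    rw [← hk]
    rfl

lemma min_le_stoppedProcess_hitTime {Y : ℕ → Ω → ℝ} {A : ℝ} (hY : ∀ t ω, Y t ω - A ≤ Y (t + 1) ω)
    (β : ℝ) (n : ℕ) (ω : Ω) :
    min (Y 0 ω) (β - A) ≤ stoppedProcess Y (hitTime Y β) n ω := by
  obtain ⟨k, hk, hstop⟩ := exists_eq_min_and_stoppedProcess_eq Y (hitTime Y β) n ω
  rw [hstop]
  refine min_le_of_sub_le_succ_of_forall_lt (y := fun t ↦ Y t ω) (fun j ↦ hY j ω) fun j hj ↦ ?_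
  exact lt_of_lt_hitTime ((Nat.cast_lt.2 hj).trans_le (hk ▸ min_le_right _ _))

lemma MeasureTheory.Adapted.truncY {m0 : MeasurableSpace Ω} {ℱ : Filtration ℕ m0}
    {X : ℕ → Ω → ℝ} (hX : Adapted ℱ X) (A : ℝ) : Adapted ℱ (truncY A X) := by
  intro t
  induction t with
  | zero => exact hX 0
  | succ t ih =>
    have hmono := ℱ.mono t.le_succ
    exact (ih.mono hmono le_rfl).add
      (((hX (t + 1)).sub ((hX t).mono hmono le_rfl)).max measurable_const)

variable {m0 : MeasurableSpace Ω} {μ : Measure Ω} {ℱ : Filtration ℕ m0}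

lemma isStoppingTime_hitTime {Y : ℕ → Ω → ℝ} (hY : Adapted ℱ Y) (β : ℝ) :
    IsStoppingTime ℱ (hitTime Y β) :=
  hitTime_eq_hittingAfter Y β ▸ hY.isStoppingTime_hittingAfter measurableSet_Iic

lemma supermartingale_add_mul_of_condExp_sub_le [IsFiniteMeasure μ] {Y : ℕ → Ω → ℝ} {B : ℝ}
    (hY : Adapted ℱ Y) (hint : ∀ t, Integrable (Y t) μ)
    (hdrift : ∀ t, ∀ᵐ ω ∂μ, μ[Y (t + 1) - Y t | ℱ t] ω ≤ -B) :
    Supermartingale (fun t ω ↦ Y t ω + B * t) ℱ μ := by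
  refine supermartingale_of_condExp_sub_nonneg_nat
    (fun t ↦ (hY t).stronglyMeasurable.add stronglyMeasurable_const)
    (fun t ↦ (hint t).add (integrable_const _)) fun t ↦ ?_
  have hsub : (fun ω ↦ Y t ω + B * t) - (fun ω ↦ Y (t + 1) ω + B * ↑(t + 1)) =
      (fun _ ↦ -B) - (Y (t + 1) - Y t) := by
    funext ω
    simp only [Pi.sub_apply]
    push_cast
    ring
  rw [hsub]
  filter_upwards [condExp_sub (integrable_const (-B)) ((hint (t + 1)).sub (hint t)) (ℱ t),
    hdrift t] with ω hω hdω
  rw [hω, Pi.sub_apply, condExp_const (ℱ.le t)]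
  simpa using hdω

lemma MeasureTheory.Supermartingale.integral_stoppedProcess_le [SigmaFiniteFiltration μ ℱ]
    {M : ℕ → Ω → ℝ} (hM : Supermartingale M ℱ μ) {τ : Ω → ℕ∞} (hτ : IsStoppingTime ℱ τ) (n : ℕ) :
    ∫ ω, stoppedProcess M τ n ω ∂μ ≤ ∫ ω, M 0 ω ∂μ := by
  have := hM.neg.expected_stoppedValue_mono (isStoppingTime_const ℱ 0)
    ((isStoppingTime_const ℱ n).min hτ) (fun ω ↦ bot_le) (N := n) fun ω ↦ min_le_left _ _
  simpa [stoppedValue, stoppedProcess, integral_neg] using this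

lemma lintegral_le_of_integral_stoppedProcess_le [IsFiniteMeasure μ] {τ : Ω → ℕ∞}
    (hτ : IsStoppingTime ℱ τ) {c : ℝ}
    (h : ∀ n, ∫ ω, stoppedProcess (fun (t : ℕ) (_ : Ω) ↦ (t : ℝ)) τ n ω ∂μ ≤ c) :
    ∫⁻ ω, (τ ω : ℝ≥0∞) ∂μ ≤ ENNReal.ofReal c := by
  set T : ℕ → Ω → ℝ := stoppedProcess (fun (t : ℕ) (_ : Ω) ↦ (t : ℝ)) τ
  have hT : ∀ n, Integrable (T n) μ := integrable_stoppedProcess hτ fun _ ↦ integrable_const _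
  have hofReal : ∀ n ω, ENNReal.ofReal (T n ω) = min (n : ℝ≥0∞) (τ ω) := by
    intro n ω
    obtain ⟨k, hk, hstop⟩ := exists_eq_min_and_stoppedProcess_eq (fun t _ ↦ (t : ℝ)) τ n ω
    rw [show T n ω = k from hstop, ENNReal.ofReal_natCast, ← ENat.toENNReal_coe, hk,
      ENat.toENNReal_min, ENat.toENNReal_coe]
  have hT_eq : ∀ ω, (τ ω : ℝ≥0∞) = ⨆ n, ENNReal.ofReal (T n ω) := by
    intro ω
    simp only [hofReal, ← iSup_inf_eq, ENNReal.iSup_natCast, top_inf_eq]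
  calc ∫⁻ ω, (τ ω : ℝ≥0∞) ∂μ = ⨆ n, ∫⁻ ω, ENNReal.ofReal (T n ω) ∂μ := by
        simp_rw [hT_eq]
        refine lintegral_iSup' (fun n ↦ (hT n).aemeasurable.ennreal_ofReal) (ae_of_all _ ?_)
        intro ω m n hmn
        simp only [hofReal]
        gcongr
    _ ≤ ENNReal.ofReal c := by
        refine iSup_le fun n ↦ ?_
        rw [← ofReal_integral_eq_lintegral_ofReal (hT n) (ae_of_all _ fun ω ↦ ?_)]
        · exact ENNReal.ofReal_le_ofReal (h n)
        · obtain ⟨k, -, hstop⟩ := exists_eq_min_and_stoppedProcess_eq (fun t _ ↦ (t : ℝ)) τ n ω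
          simp [T, hstop]

variable [IsProbabilityMeasure μ] {Y : ℕ → Ω → ℝ} {x₀ A B : ℝ}

lemma mul_integral_stoppedProcess_hitTime_le (hY : Adapted ℱ Y) (hint : ∀ t, Integrable (Y t) μ)
    (hjump : ∀ t ω, Y t ω - A ≤ Y (t + 1) ω)
    (hdrift : ∀ t, ∀ᵐ ω ∂μ, μ[Y (t + 1) - Y t | ℱ t] ω ≤ -B) (hY0 : ∀ᵐ ω ∂μ, Y 0 ω = x₀)
    (β : ℝ) (n : ℕ) :
    B * ∫ ω, stoppedProcess (fun (t : ℕ) (_ : Ω) ↦ (t : ℝ)) (hitTime Y β) n ω ∂μ ≤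
      x₀ - min x₀ (β - A) := by
  set τ := hitTime Y β
  have hτ : IsStoppingTime ℱ τ := isStoppingTime_hitTime hY β
  have hM := supermartingale_add_mul_of_condExp_sub_le hY hint hdrift
  have hT : Integrable (stoppedProcess (fun (t : ℕ) (_ : Ω) ↦ (t : ℝ)) τ n) μ :=
    integrable_stoppedProcess hτ (fun _ ↦ integrable_const _) n
  have hM0 : ∫ ω, Y 0 ω + B * ((0 : ℕ) : ℝ) ∂μ = x₀ := by
    rw [integral_congr_ae (g := fun _ ↦ x₀) (hY0.mono fun ω hω ↦ by simp [hω])]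
    simp
  have hlower : ∫ ω, min x₀ (β - A) + B * stoppedProcess (fun (t : ℕ) (_ : Ω) ↦ (t : ℝ)) τ n ω ∂μ
      ≤ ∫ ω, stoppedProcess (fun t ω ↦ Y t ω + B * t) τ n ω ∂μ := by
    refine integral_mono_ae ((integrable_const _).add (hT.const_mul B))
      (integrable_stoppedProcess hτ hM.integrable n) ?_
    filter_upwards [hY0] with ω hω
    exact add_le_add_left (hω ▸ min_le_stoppedProcess_hitTime hjump β n ω) _
  rw [integral_add (integrable_const _) (hT.const_mul B), integral_const_mul] at hlower
  simp only [integral_const, probReal_univ, smul_eq_mul, one_mul] at hlower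
  linarith [hM.integral_stoppedProcess_le hτ n]

theorem lintegral_hitTime_le_of_drift (hY : Adapted ℱ Y) (hint : ∀ t, Integrable (Y t) μ)
    (hjump : ∀ t ω, Y t ω - A ≤ Y (t + 1) ω) (hB : 0 < B)
    (hdrift : ∀ t, ∀ᵐ ω ∂μ, μ[Y (t + 1) - Y t | ℱ t] ω ≤ -B) (hY0 : ∀ᵐ ω ∂μ, Y 0 ω = x₀)
    (β : ℝ) :
    ∫⁻ ω, (hitTime Y β ω : ℝ≥0∞) ∂μ ≤ ENNReal.ofReal ((x₀ - β + A) / B) := by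
  calc ∫⁻ ω, (hitTime Y β ω : ℝ≥0∞) ∂μ ≤ ENNReal.ofReal ((x₀ - min x₀ (β - A)) / B) :=
        lintegral_le_of_integral_stoppedProcess_le (isStoppingTime_hitTime hY β) fun n ↦
          (le_div_iff₀' hB).2 (mul_integral_stoppedProcess_hitTime_le hY hint hjump hdrift hY0 β n)
    _ = ENNReal.ofReal ((x₀ - β + A) / B) := by
        rcases le_total x₀ (β - A) with h | h
        · rw [min_eq_left h, sub_self, zero_div, ENNReal.ofReal_zero, eq_comm,
            ENNReal.ofReal_eq_zero]
          exact div_nonpos_of_nonpos_of_nonneg (by linarith) hB.le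
        · rw [min_eq_right h, sub_sub_eq_add_sub, add_sub_right_comm]

end

theorem drift_upper_bound_truncated_general
    {Ω : Type*} {m0 : MeasurableSpace Ω} (μ : Measure Ω) [IsProbabilityMeasure μ]
    (ℱ : Filtration ℕ m0) (X : ℕ → Ω → ℝ) (hadapted : Adapted ℱ X)
    (x₀ β : ℝ) (hX0 : ∀ᵐ ω ∂μ, X 0 ω = x₀)
    (A B : ℝ) (hB : 0 < B)
    (hint : ∀ t, Integrable (truncY A X t) μ)
    (hdrift : ∀ t, ∀ᵐ ω ∂μ,
      (μ[(fun ω => max (X (t+1) ω - X t ω) (-A)) | ℱ t]) ω ≤ -B) :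
    (∫⁻ ω, (hitTime X β ω : ℝ≥0∞) ∂μ) ≤ ∫⁻ ω, (hitTime (truncY A X) β ω : ℝ≥0∞) ∂μ ∧
    (∫⁻ ω, (hitTime (truncY A X) β ω : ℝ≥0∞) ∂μ) ≤ ENNReal.ofReal ((x₀ - β + A) / B) := by
  refine ⟨lintegral_mono fun ω ↦ ENat.toENNReal_le.2 (hitTime_mono (le_truncY A X) β ω), ?_⟩
  refine lintegral_hitTime_le_of_drift (hadapted.truncY A) hint (truncY_sub_le_succ A X) hB
    (fun t ↦ ?_) hX0 β
  rw [truncY_succ_sub]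
  exact hdrift t

/-- Upper bound on the expected hitting time via drift on the truncated process. -/
theorem drift_upper_bound_truncated
    {Ω : Type*} {m0 : MeasurableSpace Ω} (μ : Measure Ω) [IsProbabilityMeasure μ]
    (ℱ : Filtration ℕ m0) (X : ℕ → Ω → ℝ) (hadapted : Adapted ℱ X)
    (x₀ β : ℝ) (hX0 : ∀ᵐ ω ∂μ, X 0 ω = x₀) (hβ : β < x₀)
    (A B : ℝ) (hA : 0 < A) (hB : 0 < B)
    (hint : ∀ t, Integrable (truncY A X t) μ)
    (hdrift : ∀ t, ∀ᵐ ω ∂μ,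
      (μ[(fun ω => max (X (t+1) ω - X t ω) (-A)) | ℱ t]) ω ≤ -B) :
    (∫⁻ ω, (hitTime X β ω : ℝ≥0∞) ∂μ) ≤ ∫⁻ ω, (hitTime (truncY A X) β ω : ℝ≥0∞) ∂μ ∧
    (∫⁻ ω, (hitTime (truncY A X) β ω : ℝ≥0∞) ∂μ) ≤ ENNReal.ofReal ((x₀ - β + A) / B) :=
  drift_upper_bound_truncated_general μ ℱ X hadapted x₀ β hX0 A B hB hint hdrift
end

section
/- Let (X_t)_{t≥0} be a sequence of integrable real-valued random variables adapted to a filtration (F_t)_{t≥0} such that X_0 = x_0 ∈ ℝ almost surely, X_{t+1} ≤ X_t almost surely for every t, and E[X_{t+1} | F_t] − X_t ≥ −C almost surely for every t, where C > 0. Then for every β < x_0 the first hitting time satisfies E[T^X_β] ≥ (x_0 − β)/(4C) − 1/2. -/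
/-!
Since the process is non-increasing, it has not hit `(-∞, β]` by time `m` as long as `X m > β`,
so `E[T] ≥ (m + 1) P(X m > β)`. The drift bound gives `E[X m] ≥ x₀ - m C`, and Markov's inequality
applied to the non-negative variable `x₀ - X m` gives `P(X m ≤ β) ≤ m C / (x₀ - β)`. Taking
`m = ⌊(x₀ - β) / (2 C)⌋` makes this probability at most `1/2`, whence `E[T] ≥ (m + 1) / 2`.
-/

open MeasureTheory ProbabilityTheory Real Set Filter
open scoped ENNReal ENat

section

variable {Ω : Type*}

lemma natCast_succ_le_hitTime {X : ℕ → Ω → ℝ} {β : ℝ} {ω : Ω} (hX : Antitone (X · ω))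
    {m : ℕ} (h : β < X m ω) : ((m + 1 : ℕ) : ℕ∞) ≤ hitTime X β ω :=
  le_iInf fun k => Nat.cast_le.2 <| Nat.succ_le_of_lt <| lt_of_not_ge fun hkm =>
    lt_irrefl β (h.trans_le ((hX hkm).trans k.2))

lemma mul_measure_lt_le_lintegral_hitTime [MeasurableSpace Ω] {μ : Measure Ω}
    {X : ℕ → Ω → ℝ} {β : ℝ} (hX : ∀ᵐ ω ∂μ, Antitone (X · ω)) {m : ℕ}
    (hm : AEMeasurable (X m) μ) :
    ((m + 1 : ℕ) : ℝ≥0∞) * μ {ω | β < X m ω} ≤ ∫⁻ ω, (hitTime X β ω : ℝ≥0∞) ∂μ := by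
  rw [← lintegral_indicator_const₀ (nullMeasurableSet_lt aemeasurable_const hm)]
  refine lintegral_mono_ae ?_
  filter_upwards [hX] with ω hXω
  rw [indicator_apply]
  split_ifs with hω
  · exact_mod_cast natCast_succ_le_hitTime hXω hω
  · exact zero_le

lemma integral_sub_mul_le_integral_of_condExp_sub_ge {m0 : MeasurableSpace Ω} {μ : Measure Ω}
    [IsProbabilityMeasure μ] {ℱ : Filtration ℕ m0} {X : ℕ → Ω → ℝ} {C : ℝ}
    (hint : ∀ t, Integrable (X t) μ) (hdrift : ∀ t, ∀ᵐ ω ∂μ, -C ≤ μ[X (t + 1) | ℱ t] ω - X t ω)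
    (n : ℕ) : ∫ ω, X 0 ω ∂μ - n * C ≤ ∫ ω, X n ω ∂μ := by
  induction n with
  | zero => simp
  | succ n ih =>
    have hstep : ∫ ω, X n ω ∂μ - C ≤ ∫ ω, X (n + 1) ω ∂μ := by
      have h := integral_mono_ae (integrable_const (-C)) (integrable_condExp.sub (hint n))
        (hdrift n)
      rw [integral_const, integral_sub' integrable_condExp (hint n),
        integral_condExp (ℱ.le n)] at h
      simp only [probReal_univ, one_smul] at h
      linarith
    push_cast
    linarith

lemma one_sub_div_le_probReal_lt [MeasurableSpace Ω] {μ : Measure Ω} [IsProbabilityMeasure μ]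
    {Y : Ω → ℝ} {x₀ β : ℝ} (hY : Integrable Y μ) (hle : ∀ᵐ ω ∂μ, Y ω ≤ x₀) (hβ : β < x₀) :
    1 - (x₀ - ∫ ω, Y ω ∂μ) / (x₀ - β) ≤ μ.real {ω | β < Y ω} := by
  have hmarkov := mul_meas_ge_le_integral_of_nonneg (hle.mono fun ω h => sub_nonneg.2 h)
    ((integrable_const x₀).sub hY) (x₀ - β)
  have hset : {ω | x₀ - β ≤ x₀ - Y ω} = {ω | Y ω ≤ β} := by
    ext ω
    simp only [mem_ofPred_eq, sub_le_sub_iff_left]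
  have hcompl : {ω | β < Y ω} = {ω | Y ω ≤ β}ᶜ := by
    ext ω
    simp only [mem_ofPred_eq, mem_compl_iff, not_le]
  rw [hset, integral_sub (integrable_const x₀) hY, integral_const, probReal_univ, one_smul]
    at hmarkov
  rw [hcompl, probReal_compl_eq_one_sub₀ (nullMeasurableSet_le hY.aemeasurable aemeasurable_const),
    sub_le_sub_iff_left, le_div_iff₀' (sub_pos.2 hβ)]
  exact hmarkov

end

theorem drift_lower_bound_general
    {Ω : Type*} {m0 : MeasurableSpace Ω} (μ : Measure Ω) [IsProbabilityMeasure μ]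
    (ℱ : Filtration ℕ m0) (X : ℕ → Ω → ℝ)
    (hint : ∀ t, Integrable (X t) μ)
    (x₀ : ℝ) (hX0 : ∀ᵐ ω ∂μ, X 0 ω = x₀)
    (hmono : ∀ t, ∀ᵐ ω ∂μ, X (t+1) ω ≤ X t ω)
    (C : ℝ) (hC : 0 < C)
    (hdrift : ∀ t, ∀ᵐ ω ∂μ, (μ[X (t+1) | ℱ t]) ω - X t ω ≥ -C)
    (β : ℝ) (hβ : β < x₀) :
    ENNReal.ofReal ((x₀ - β) / (4 * C) - 1/2) ≤ ∫⁻ ω, (hitTime X β ω : ℝ≥0∞) ∂μ := by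
  have hD : 0 < x₀ - β := sub_pos.2 hβ
  set r := (x₀ - β) / (2 * C)
  set m := ⌊r⌋₊
  have hanti : ∀ᵐ ω ∂μ, Antitone (X · ω) :=
    (ae_all_iff.2 hmono).mono fun ω h => antitone_nat_of_succ_le h
  have hXm_le : ∀ᵐ ω ∂μ, X m ω ≤ x₀ := by
    filter_upwards [hanti, hX0] with ω hω hω0
    exact hω0 ▸ hω (Nat.zero_le m)
  have hmean : x₀ - m * C ≤ ∫ ω, X m ω ∂μ := by
    simpa [integral_congr_ae hX0] using
      integral_sub_mul_le_integral_of_condExp_sub_ge hint hdrift m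
  have hhalf : 1 / 2 ≤ μ.real {ω | β < X m ω} := by
    refine le_trans ?_ (one_sub_div_le_probReal_lt (hint m) hXm_le hβ)
    have hmr : (m : ℝ) * (2 * C) ≤ x₀ - β :=
      (le_div_iff₀ (by positivity)).1 (Nat.floor_le (by positivity))
    rw [le_sub_comm, div_le_iff₀ hD]
    nlinarith
  calc ENNReal.ofReal ((x₀ - β) / (4 * C) - 1 / 2)
      ≤ ENNReal.ofReal ((m + 1 : ℕ) * (1 / 2)) := by
        refine ENNReal.ofReal_le_ofReal ?_
        have : (x₀ - β) / (4 * C) = r / 2 := by ring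
        push_cast
        linarith [Nat.lt_floor_add_one r]
    _ = ((m + 1 : ℕ) : ℝ≥0∞) * ENNReal.ofReal (1 / 2) := by
        rw [ENNReal.ofReal_mul (Nat.cast_nonneg _), ENNReal.ofReal_natCast]
    _ ≤ ((m + 1 : ℕ) : ℝ≥0∞) * μ {ω | β < X m ω} := by
        gcongr
        exact ENNReal.ofReal_le_of_le_toReal hhalf
    _ ≤ ∫⁻ ω, (hitTime X β ω : ℝ≥0∞) ∂μ :=
        mul_measure_lt_le_lintegral_hitTime hanti (hint m).aemeasurable

/-- Lower bound on the expected hitting time for a monotone process with bounded drift. -/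
theorem drift_lower_bound
    {Ω : Type*} {m0 : MeasurableSpace Ω} (μ : Measure Ω) [IsProbabilityMeasure μ]
    (ℱ : Filtration ℕ m0) (X : ℕ → Ω → ℝ) (hadapted : Adapted ℱ X)
    (hint : ∀ t, Integrable (X t) μ)
    (x₀ : ℝ) (hX0 : ∀ᵐ ω ∂μ, X 0 ω = x₀)
    (hmono : ∀ t, ∀ᵐ ω ∂μ, X (t+1) ω ≤ X t ω)
    (C : ℝ) (hC : 0 < C)
    (hdrift : ∀ t, ∀ᵐ ω ∂μ, (μ[X (t+1) | ℱ t]) ω - X t ω ≥ -C)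
    (β : ℝ) (hβ : β < x₀) :
    ENNReal.ofReal ((x₀ - β) / (4 * C) - 1/2) ≤ ∫⁻ ω, (hitTime X β ω : ℝ≥0∞) ∂μ :=
  drift_lower_bound_general μ ℱ X hint x₀ hX0 hmono C hC hdrift β hβ
end

section
/- For every dimension d ≥ 1, the map σ̄ ↦ p^succ_{0,d}(σ̄) is strictly monotonically decreasing on (0, ∞). -/
open MeasureTheory ProbabilityTheory Real Set Filter
open scoped ENNReal

/-- The standard Gaussian measure `N(0, I_d)` on `ℝ^d`. -/
noncomputable def stdGaussian (d : ℕ) : Measure (EuclideanSpace ℝ (Fin d)) :=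
  (Measure.pi (fun _ : Fin d => gaussianReal 0 1)).map
    (EuclideanSpace.equiv (Fin d) ℝ).symm

/-- The Gaussian measure `N(m, σ² I_d)` on `ℝ^d`. -/
noncomputable def gaussianVec (d : ℕ) (m : EuclideanSpace ℝ (Fin d)) (σ : ℝ) :
    Measure (EuclideanSpace ℝ (Fin d)) :=
  (stdGaussian d).map (fun z => m + σ • z)

/-- The first standard basis vector of `ℝ^d` (zero if `d = 0`). -/
noncomputable def e1 (d : ℕ) : EuclideanSpace ℝ (Fin d) :=
  if h : 0 < d then EuclideanSpace.single ⟨0, h⟩ 1 else 0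

/-- The success probability with rate `r` and normalized step size `σb`:
`Pr(‖e₁ + (σb/d)·N‖ < 1 - r)` for `N ∼ N(0, I_d)`. -/
noncomputable def psucc (d : ℕ) (r σb : ℝ) : ℝ :=
  ((stdGaussian d) {z | ‖e1 d + (σb / d) • z‖ < 1 - r}).toReal

/-! For `t > 0` the event `‖e₁ + t • N‖ < 1` is `N ∈ ball (-t⁻¹ • e₁) t⁻¹`. These balls all pass
through the origin with the same inward direction `-e₁`, so they grow strictly with `t⁻¹`:
the larger one contains the nonempty open set outside the closure of the smaller one, and the
Gaussian measure charges every nonempty open set. -/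

lemma isOpenPosMeasure_gaussianReal (m : ℝ) {v : NNReal} (hv : v ≠ 0) :
    (gaussianReal m v).IsOpenPosMeasure :=
  (gaussianReal_absolutelyContinuous' m hv).isOpenPosMeasure

instance (d : ℕ) : IsProbabilityMeasure (stdGaussian d) :=
  Measure.isProbabilityMeasure_map (EuclideanSpace.equiv (Fin d) ℝ).symm.continuous.aemeasurable

instance (d : ℕ) : (stdGaussian d).IsOpenPosMeasure :=
  have := isOpenPosMeasure_gaussianReal 0 one_ne_zero
  (EuclideanSpace.equiv (Fin d) ℝ).symm.continuous.isOpenPosMeasure_map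
    (EuclideanSpace.equiv (Fin d) ℝ).symm.surjective

lemma norm_e1 {d : ℕ} (hd : 0 < d) : ‖e1 d‖ = 1 := by
  rw [e1, dif_pos hd, PiLp.norm_single, norm_one]

lemma measure_lt_measure_of_isOpen_subset_diff {X : Type*} [TopologicalSpace X]
    [MeasurableSpace X] [OpensMeasurableSpace X] {μ : Measure X} [μ.IsOpenPosMeasure]
    {s t U : Set X} (hst : s ⊆ t) (hs : μ s ≠ ∞) (hU : IsOpen U) (hUne : U.Nonempty)
    (hUt : U ⊆ t \ s) : μ s < μ t :=
  calc μ s < μ s + μ U := ENNReal.lt_add_right hs (hU.measure_ne_zero μ hUne)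
    _ = μ (s ∪ U) :=
      (measure_union (disjoint_sdiff_right.mono_right hUt) hU.measurableSet).symm
    _ ≤ μ t := measure_mono (union_subset hst (hUt.trans sdiff_subset))

section BallThroughOrigin

variable {E : Type*} [NormedAddCommGroup E] [NormedSpace ℝ E]

lemma setOf_norm_add_smul_lt_eq_ball (x : E) {t : ℝ} (ht : 0 < t) (r : ℝ) :
    {z : E | ‖x + t • z‖ < r} = Metric.ball (-t⁻¹ • x) (r / t) := by
  ext z
  have : x + t • z = t • (z - -t⁻¹ • x) := by
    rw [smul_sub, neg_smul, smul_neg, smul_inv_smul₀ ht.ne', sub_neg_eq_add, add_comm]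
  rw [mem_ofPred_eq, Metric.mem_ball, dist_eq_norm, this, norm_smul, Real.norm_of_nonneg ht.le,
    lt_div_iff₀ ht, mul_comm]

variable {e : E} {u v : ℝ}

lemma ball_neg_smul_subset (he : ‖e‖ = 1) (huv : u ≤ v) :
    Metric.ball (-u • e) u ⊆ Metric.ball (-v • e) v := by
  refine Metric.ball_subset_ball' ?_
  rw [dist_eq_norm, ← sub_smul, norm_smul, he, mul_one, Real.norm_of_nonneg (by linarith)]
  linarith

lemma neg_add_smul_mem_ball_diff_closedBall (he : ‖e‖ = 1) (hu : 0 ≤ u) (huv : u < v) :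
    -(u + v) • e ∈ Metric.ball (-v • e) v \ Metric.closedBall (-u • e) u := by
  have hv : 0 ≤ v := hu.trans huv.le
  simp only [Set.mem_sdiff, Metric.mem_ball, Metric.mem_closedBall, dist_eq_norm, ← sub_smul,
    norm_smul, he, mul_one, not_le, Real.norm_eq_abs]
  constructor
  · rw [show -(u + v) - -v = -u by ring, abs_neg, abs_of_nonneg hu]; exact huv
  · rw [show -(u + v) - -u = -v by ring, abs_neg, abs_of_nonneg hv]; exact huv

variable [MeasurableSpace E] [OpensMeasurableSpace E] {μ : Measure E} [IsFiniteMeasure μ]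
  [μ.IsOpenPosMeasure]

lemma measure_ball_neg_smul_lt (he : ‖e‖ = 1) (hu : 0 ≤ u) (huv : u < v) :
    μ (Metric.ball (-u • e) u) < μ (Metric.ball (-v • e) v) :=
  measure_lt_measure_of_isOpen_subset_diff (ball_neg_smul_subset he huv.le) (measure_ne_top μ _)
    (Metric.isOpen_ball.sdiff Metric.isClosed_closedBall)
    ⟨_, neg_add_smul_mem_ball_diff_closedBall he hu huv⟩
    (sdiff_subset_sdiff_right Metric.ball_subset_closedBall)

end BallThroughOrigin

lemma psucc_zero_eq_measureReal_ball {d : ℕ} {σ : ℝ} (hσ : 0 < σ) (hd : 0 < d) :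
    psucc d 0 σ = (stdGaussian d).real (Metric.ball (-(d / σ) • e1 d) (d / σ)) := by
  have hd' : (0 : ℝ) < d := by exact_mod_cast hd
  rw [psucc, sub_zero, setOf_norm_add_smul_lt_eq_ball _ (div_pos hσ hd'), inv_div, one_div,
    inv_div, measureReal_def]

/-- For `d ≥ 1`, the success probability `σ̄ ↦ p^succ_{0,d}(σ̄)` is strictly
monotonically decreasing on `(0, ∞)`. -/
theorem psucc_strictAnti (d : ℕ) (hd : 1 ≤ d) : StrictAntiOn (psucc d 0) (Set.Ioi 0) := by
  have hd' : (0 : ℝ) < d := by exact_mod_cast hd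
  intro a ha b hb hab
  rw [psucc_zero_eq_measureReal_ball hb hd, psucc_zero_eq_measureReal_ball ha hd]
  exact ENNReal.toReal_strict_mono (measure_ne_top _ _) <|
    measure_ball_neg_smul_lt (norm_e1 hd) (div_pos hd' hb).le (div_lt_div_of_pos_left hd' ha hab)
end

section
/- Let r : ℕ → [0, 1) be a sequence of rates such that lim_{d → ∞} d·r(d) = ρ for some ρ ≥ 0. Then for every σ̄ > 0 the limit lim_{d → ∞} p^succ_{r(d),d}(σ̄) exists and equals Φ(−ρ/σ̄ − σ̄/2), where Φ is the cumulative distribution function of the standard normal distribution on ℝ. -/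
open MeasureTheory ProbabilityTheory Real Set Filter
open scoped ENNReal

/-- The cumulative distribution function of the standard normal distribution on `ℝ`. -/
noncomputable def stdNormalCDF (x : ℝ) : ℝ := ((gaussianReal 0 1) (Set.Iic x)).toReal

/-!
Realise all dimensions on one i.i.d. standard Gaussian sequence `ω`, with `N = (ω₀, …, ω_{d-1})`.
Expanding `‖e₁ + (σ̄/d) N‖² < (1 - r)²`, the success event becomes
`ω₀ + (σ̄/2)(‖N‖²/d - 1) < d((1 - r)² - 1)/(2σ̄) - σ̄/2`.
By the strong law of large numbers `‖N‖²/d → 1` almost surely, so the noise term tends to `0`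
in probability, while `d r(d) → ρ` makes the threshold tend to `-ρ/σ̄ - σ̄/2`. Since `ω₀` has the
continuous distribution function `Φ`, a Slutsky-type sandwich gives the limit.
-/

theorem ProbabilityTheory.continuous_cdf (μ : Measure ℝ) [IsProbabilityMeasure μ]
    [NullSingletonClass μ] : Continuous (cdf μ) := by
  refine continuous_iff_continuousAt.2 fun x ↦ ?_
  have hleft : (cdf μ) x ≤ Function.leftLim (cdf μ) x := by
    have h := (cdf μ).measure_singleton x
    rw [measure_cdf, measure_singleton, eq_comm, ENNReal.ofReal_eq_zero] at h
    linarith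
  rw [(monotone_cdf μ).continuousAt_iff_leftLim_eq_rightLim, (cdf μ).rightLim_eq]
  exact le_antisymm ((monotone_cdf μ).leftLim_le le_rfl) hleft

theorem continuous_stdNormalCDF : Continuous stdNormalCDF := by
  have := nullSingletonClass_gaussianReal (μ := 0) one_ne_zero
  convert continuous_cdf (gaussianReal 0 1) using 1
  ext s
  rw [cdf_eq_real, stdNormalCDF, measureReal_def]

theorem ProbabilityTheory.integral_sq_gaussianReal (m : ℝ) (v : NNReal) :
    ∫ x, x ^ 2 ∂gaussianReal m v = v + m ^ 2 := by
  have h := variance_eq_sub (memLp_id_gaussianReal (μ := m) (v := v) 2)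
  simp only [variance_id_gaussianReal, Pi.pow_apply, id_eq, integral_id_gaussianReal] at h
  linarith

section Slutsky

variable {Ω : Type*} [MeasurableSpace Ω] {μ : Measure Ω} [IsFiniteMeasure μ]

theorem measureReal_add_lt_le (X Y : Ω → ℝ) (t η : ℝ) :
    μ.real {ω | X ω + Y ω < t} ≤ μ.real {ω | X ω ≤ t + η} + μ.real {ω | η ≤ |Y ω|} := by
  refine (measureReal_mono fun ω hω ↦ ?_).trans (measureReal_union_le _ _)
  by_cases hY : η ≤ |Y ω|
  · exact Or.inr hY
  · have := (abs_lt.1 (not_le.1 hY)).1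
    exact Or.inl (by simp only [mem_ofPred_eq] at hω ⊢; linarith)

theorem measureReal_le_sub_le_add_lt (X Y : Ω → ℝ) (t η : ℝ) :
    μ.real {ω | X ω ≤ t - η} ≤ μ.real {ω | X ω + Y ω < t} + μ.real {ω | η ≤ |Y ω|} := by
  refine (measureReal_mono fun ω hω ↦ ?_).trans (measureReal_union_le _ _)
  by_cases hY : η ≤ |Y ω|
  · exact Or.inr hY
  · have := (abs_lt.1 (not_le.1 hY)).2
    exact Or.inl (by simp only [mem_ofPred_eq] at hω ⊢; linarith)

theorem tendsto_measureReal_add_lt {ι : Type*} {l : Filter ι} {X : Ω → ℝ} {Y : ι → Ω → ℝ}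
    {t : ι → ℝ} {t₀ : ℝ} (hX : ContinuousAt (fun s ↦ μ.real {ω | X ω ≤ s}) t₀)
    (hY : TendstoInMeasure μ Y l 0) (ht : Tendsto t l (nhds t₀)) :
    Tendsto (fun i ↦ μ.real {ω | X ω + Y i ω < t i}) l (nhds (μ.real {ω | X ω ≤ t₀})) := by
  rw [Metric.tendsto_nhds]
  intro ε hε
  obtain ⟨δ, hδ, hF⟩ := Metric.continuousAt_iff.1 hX (ε / 2) (half_pos hε)
  have hYsmall : ∀ᶠ i in l, μ.real {ω | δ / 2 ≤ |Y i ω|} < ε / 2 := by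
    have := (tendstoInMeasure_iff_measureReal_dist.1 hY) (δ / 2) (half_pos hδ)
    simpa [Real.dist_eq] using this.eventually (gt_mem_nhds (half_pos hε))
  have htclose : ∀ᶠ i in l, dist (t i) t₀ < δ / 2 :=
    Metric.tendsto_nhds.1 ht _ (half_pos hδ)
  filter_upwards [hYsmall, htclose] with i hYi hti
  have hup := hF (x := t i + δ / 2) (by rw [Real.dist_eq] at hti ⊢; grind)
  have hlow := hF (x := t i - δ / 2) (by rw [Real.dist_eq] at hti ⊢; grind)
  have hupper := measureReal_add_lt_le (μ := μ) X (Y i) (t i) (δ / 2)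
  have hlower := measureReal_le_sub_le_add_lt (μ := μ) X (Y i) (t i) (δ / 2)
  rw [Real.dist_eq, abs_lt] at hup hlow ⊢
  constructor <;> linarith [measureReal_nonneg (μ := μ) (s := {ω | δ / 2 ≤ |Y i ω|})]

end Slutsky

theorem EuclideanSpace.norm_single_one_add_smul_sq {ι : Type*} [Fintype ι] [DecidableEq ι]
    (i : ι) (c : ℝ) (z : EuclideanSpace ℝ ι) :
    ‖EuclideanSpace.single i 1 + c • z‖ ^ 2 = 1 + 2 * c * z i + c ^ 2 * ‖z‖ ^ 2 := by
  rw [norm_add_sq_real, PiLp.norm_single, norm_one, inner_smul_right,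
    EuclideanSpace.inner_single_left, map_one, one_mul, norm_smul, mul_pow, Real.norm_eq_abs,
    sq_abs]
  ring

noncomputable abbrev gaussianSeq : Measure (ℕ → ℝ) :=
  Measure.infinitePi fun _ ↦ gaussianReal 0 1

theorem ae_tendsto_avg_sq_gaussianSeq :
    ∀ᵐ ω ∂gaussianSeq,
      Tendsto (fun n : ℕ ↦ (∑ i ∈ Finset.range n, ω i ^ 2) / (n : ℝ)) atTop (nhds 1) := by
  have hmp := measurePreserving_eval_infinitePi (fun _ : ℕ ↦ gaussianReal (0 : ℝ) 1)
  have hint : Integrable (fun ω : ℕ → ℝ ↦ ω 0 ^ 2) gaussianSeq :=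
    (hmp 0).integrable_comp_of_integrable (g := fun x : ℝ ↦ x ^ 2)
      (memLp_id_gaussianReal 2).integrable_sq
  have hindep : Pairwise fun i j ↦ IndepFun (fun ω : ℕ → ℝ ↦ ω i ^ 2) (fun ω ↦ ω j ^ 2)
      gaussianSeq := fun i j hij ↦
    (iIndepFun_infinitePi (X := fun _ (x : ℝ) ↦ x ^ 2) fun _ ↦ by fun_prop).indepFun hij
  have hident : ∀ i, IdentDistrib (fun ω : ℕ → ℝ ↦ ω i ^ 2) (fun ω ↦ ω 0 ^ 2)
      gaussianSeq gaussianSeq := fun i ↦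
    (IdentDistrib.mk (measurable_pi_apply i).aemeasurable (measurable_pi_apply 0).aemeasurable
      (by rw [(hmp i).map_eq, (hmp 0).map_eq])).comp (measurable_id.pow_const 2)
  have hmean : ∫ ω, ω 0 ^ 2 ∂gaussianSeq = 1 := by
    have h := integral_sq_gaussianReal 0 1
    rw [← (hmp 0).map_eq, integral_map (measurable_pi_apply 0).aemeasurable (by fun_prop)] at h
    simpa using h
  simpa [hmean] using strong_law_ae_real _ hint hindep hident

theorem stdGaussian_eq_map_gaussianSeq (d : ℕ) :
    _root_.stdGaussian d =
      gaussianSeq.map fun ω ↦ (EuclideanSpace.equiv (Fin d) ℝ).symm fun i ↦ ω i := by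
  rw [_root_.stdGaussian, ← Measure.infinitePi_eq_pi,
    ← Measure.map_infinitePi_infinitePi_of_inj (P := fun _ : ℕ ↦ gaussianReal 0 1)
      Fin.val_injective, Measure.map_map]
  · rfl
  · exact (EuclideanSpace.equiv (Fin d) ℝ).symm.continuous.measurable
  · fun_prop

theorem psucc_eq_measureReal_gaussianSeq {d : ℕ} (hd : 0 < d) {r σ : ℝ} (hr : r < 1)
    (hσ : 0 < σ) :
    psucc d r σ = gaussianSeq.real {ω | ω 0 + σ / 2 * ((∑ i ∈ Finset.range d, ω i ^ 2) / d - 1)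
      < d * ((1 - r) ^ 2 - 1) / (2 * σ) - σ / 2} := by
  have hS : MeasurableSet {z : EuclideanSpace ℝ (Fin d) | ‖e1 d + (σ / d) • z‖ < 1 - r} :=
    (isOpen_lt (by fun_prop) continuous_const).measurableSet
  have hproj : Measurable fun ω : ℕ → ℝ ↦ (EuclideanSpace.equiv (Fin d) ℝ).symm fun i ↦ ω i :=
    (EuclideanSpace.equiv (Fin d) ℝ).symm.continuous.measurable.comp (by fun_prop)
  rw [psucc, stdGaussian_eq_map_gaussianSeq, Measure.map_apply hproj hS, ← measureReal_def]
  congr 1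
  ext ω
  set z : EuclideanSpace ℝ (Fin d) := (EuclideanSpace.equiv (Fin d) ℝ).symm fun i ↦ ω i
  have he1 : e1 d = EuclideanSpace.single ⟨0, hd⟩ 1 := dif_pos hd
  have hz0 : z ⟨0, hd⟩ = ω 0 := rfl
  have hz : ‖z‖ ^ 2 = ∑ i ∈ Finset.range d, ω i ^ 2 := by
    rw [EuclideanSpace.norm_sq_eq]
    simp [Fin.sum_univ_eq_sum_range (fun i ↦ ω i ^ 2), z]
  have hd' : (0 : ℝ) < d := Nat.cast_pos.2 hd
  have key : d * ((1 - r) ^ 2 - 1) / (2 * σ) - σ / 2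
      - (ω 0 + σ / 2 * ((∑ i ∈ Finset.range d, ω i ^ 2) / d - 1))
      = d / (2 * σ) * ((1 - r) ^ 2
        - (1 + 2 * (σ / d) * ω 0 + (σ / d) ^ 2 * ∑ i ∈ Finset.range d, ω i ^ 2)) := by
    field_simp
    ring
  simp only [mem_preimage, mem_ofPred_eq]
  rw [← sq_lt_sq₀ (norm_nonneg _) (by linarith), he1,
    EuclideanSpace.norm_single_one_add_smul_sq, hz0, hz, ← sub_pos,
    ← mul_pos_iff_of_pos_left (by positivity : (0 : ℝ) < d / (2 * σ)), ← key, sub_pos]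

theorem measureReal_gaussianSeq_apply_le (i : ℕ) (s : ℝ) :
    gaussianSeq.real {ω | ω i ≤ s} = stdNormalCDF s :=
  (measurePreserving_eval_infinitePi _ i).measureReal_preimage measurableSet_Iic.nullMeasurableSet

theorem tendsto_zero_of_tendsto_natCast_mul {r : ℕ → ℝ} {ρ : ℝ}
    (h : Tendsto (fun d : ℕ ↦ d * r d) atTop (nhds ρ)) : Tendsto r atTop (nhds 0) := by
  refine (h.div_atTop tendsto_natCast_atTop_atTop).congr' ?_
  filter_upwards [eventually_ne_atTop 0] with d hd
  field_simp

theorem tendsto_natCast_mul_one_sub_sq_sub_one {r : ℕ → ℝ} {ρ : ℝ}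
    (h : Tendsto (fun d : ℕ ↦ d * r d) atTop (nhds ρ)) :
    Tendsto (fun d : ℕ ↦ d * ((1 - r d) ^ 2 - 1)) atTop (nhds (-2 * ρ)) := by
  have := (h.mul (tendsto_zero_of_tendsto_natCast_mul h)).sub (h.const_mul 2)
  convert this using 2 <;> ring

theorem psucc_limit_general (r : ℕ → ℝ)
    (ρ : ℝ)
    (hlim : Filter.Tendsto (fun d : ℕ => (d : ℝ) * r d) Filter.atTop (nhds ρ))
    (σb : ℝ) (hσb : 0 < σb) :
    Filter.Tendsto (fun d : ℕ => psucc d (r d) σb) Filter.atTop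
      (nhds (stdNormalCDF (-ρ / σb - σb / 2))) := by
  have hthreshold : Tendsto (fun d : ℕ ↦ d * ((1 - r d) ^ 2 - 1) / (2 * σb) - σb / 2) atTop
      (nhds (-ρ / σb - σb / 2)) := by
    convert ((tendsto_natCast_mul_one_sub_sq_sub_one hlim).div_const (2 * σb)).sub_const
      (σb / 2) using 2
    field_simp
  have hnoise : TendstoInMeasure gaussianSeq
      (fun (d : ℕ) ω ↦ σb / 2 * ((∑ i ∈ Finset.range d, ω i ^ 2) / d - 1)) atTop 0 := by
    refine tendstoInMeasure_of_tendsto_ae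
      (fun d ↦ (by fun_prop : Measurable _).aestronglyMeasurable) ?_
    filter_upwards [ae_tendsto_avg_sq_gaussianSeq] with ω hω
    simpa using (hω.sub_const 1).const_mul (σb / 2)
  have hcdf : ContinuousAt (fun s ↦ gaussianSeq.real {ω | ω 0 ≤ s}) (-ρ / σb - σb / 2) := by
    simpa only [measureReal_gaussianSeq_apply_le] using continuous_stdNormalCDF.continuousAt
  have hpsucc : ∀ᶠ d : ℕ in atTop, gaussianSeq.real {ω | ω 0 + σb / 2 *
      ((∑ i ∈ Finset.range d, ω i ^ 2) / d - 1) < d * ((1 - r d) ^ 2 - 1) / (2 * σb) - σb / 2}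
        = psucc d (r d) σb := by
    filter_upwards [eventually_gt_atTop 0,
      (tendsto_zero_of_tendsto_natCast_mul hlim).eventually (gt_mem_nhds one_pos)] with d hd hrd
    exact (psucc_eq_measureReal_gaussianSeq hd hrd hσb).symm
  rw [← measureReal_gaussianSeq_apply_le 0]
  exact (tendsto_measureReal_add_lt hcdf hnoise hthreshold).congr' hpsucc

/-- If `d · r(d) → ρ`, then `p^succ_{r(d),d}(σ̄) → Φ(-ρ/σ̄ - σ̄/2)` as `d → ∞`. -/
theorem psucc_limit (r : ℕ → ℝ) (hr : ∀ d, r d ∈ Set.Ico (0:ℝ) 1)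
    (ρ : ℝ) (hρ : 0 ≤ ρ)
    (hlim : Filter.Tendsto (fun d : ℕ => (d : ℝ) * r d) Filter.atTop (nhds ρ))
    (σb : ℝ) (hσb : 0 < σb) :
    Filter.Tendsto (fun d : ℕ => psucc d (r d) σb) Filter.atTop
      (nhds (stdNormalCDF (-ρ / σb - σb / 2))) :=
  psucc_limit_general r ρ hlim σb hσb
end

section
/- For every dimension d ≥ 2 the expected log progress of the hit-and-run algorithm on the sphere is at most 1/d; explicitly, (1/(2·W_{d−2})) · ∫₀^{π/2} (−log(sin θ)) · sin^{d−2}(θ) dθ ≤ 1/d. -/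
open MeasureTheory Real intervalIntegral

/-- The Wallis integral `W_n = ∫₀^{π/2} sin^n θ dθ`. -/
noncomputable def wallis (n : ℕ) : ℝ := ∫ θ in (0:ℝ)..(Real.pi / 2), Real.sin θ ^ n

/-!
Write `I_n = ∫₀^{π/2} (-log sin θ) sin^n θ dθ`. Since `s log s ≥ s - 1`, the integrand of `I_{n+1}`
is at most `sin^n θ - sin^{n+1} θ`, so `I_{n+1} ≤ W_n - W_{n+1}`. The Wallis recursion
`(n + 2) W_{n+2} = (n + 1) W_n` and `W_{n+2} ≤ W_{n+1}` give `(n + 1) W_n ≤ (n + 2) W_{n+1}`, which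
turns this into `(n + 2) I_n ≤ 2 W_n` for `n ≥ 2`. For `n = 0` one has `I_0 = (π/2) log 2`, and for
`n = 1` the bound `I_1 ≤ π/2 - 1` suffices.
-/

lemma wallis_zero : wallis 0 = π / 2 := by simp [wallis]

lemma wallis_one : wallis 1 = 1 := by simp [wallis]

lemma sin_nonneg_of_mem_Icc_zero_pi_div_two {θ : ℝ} (hθ : θ ∈ Set.Icc 0 (π / 2)) :
    0 ≤ sin θ :=
  sin_nonneg_of_nonneg_of_le_pi hθ.1 (hθ.2.trans (by linarith [pi_pos]))

lemma intervalIntegrable_sin_pow (n : ℕ) (a b : ℝ) :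
    IntervalIntegrable (fun θ => sin θ ^ n) volume a b :=
  (continuous_sin.pow n).intervalIntegrable a b

lemma wallis_pos (n : ℕ) : 0 < wallis n :=
  intervalIntegral_pos_of_pos_on (intervalIntegrable_sin_pow n _ _)
    (fun _ hθ => pow_pos (sin_pos_of_pos_of_lt_pi hθ.1 (hθ.2.trans (by linarith [pi_pos]))) n)
    (by positivity)

lemma wallis_succ_le (n : ℕ) : wallis (n + 1) ≤ wallis n :=
  integral_mono_on (by positivity) (intervalIntegrable_sin_pow _ _ _)
    (intervalIntegrable_sin_pow _ _ _) fun θ hθ =>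
    pow_le_pow_of_le_one (sin_nonneg_of_mem_Icc_zero_pi_div_two hθ) (sin_le_one θ) n.le_succ

lemma mul_wallis_add_two (n : ℕ) : (n + 2) * wallis (n + 2) = (n + 1) * wallis n := by
  rw [wallis, wallis, integral_sin_pow]
  simp [field]

lemma mul_wallis_le_mul_wallis_succ (n : ℕ) : (n + 1) * wallis n ≤ (n + 2) * wallis (n + 1) := by
  rw [← mul_wallis_add_two]
  exact mul_le_mul_of_nonneg_left (wallis_succ_le (n + 1)) (by positivity)

lemma neg_log_mul_self_le_one_sub {s : ℝ} (hs : 0 ≤ s) : -log s * s ≤ 1 - s := by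
  linarith [self_sub_one_le_mul_log hs, mul_comm s (log s)]

lemma intervalIntegrable_neg_log_sin_mul_sin_pow (n : ℕ) (a b : ℝ) :
    IntervalIntegrable (fun θ => -log (sin θ) * sin θ ^ n) volume a b :=
  (intervalIntegrable_log_sin (a := a) (b := b)).neg.mul_continuousOn
    (continuous_sin.pow n).continuousOn

lemma integral_neg_log_sin_mul_sin_pow_zero :
    ∫ θ in (0:ℝ)..(π / 2), -log (sin θ) * sin θ ^ 0 = π / 2 * log 2 := by
  simp only [pow_zero, mul_one, intervalIntegral.integral_neg, integral_log_sin_zero_pi_div_two]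
  ring

lemma integral_neg_log_sin_mul_sin_pow_succ_le (n : ℕ) :
    ∫ θ in (0:ℝ)..(π / 2), -log (sin θ) * sin θ ^ (n + 1) ≤ wallis n - wallis (n + 1) := by
  rw [wallis, wallis, ← intervalIntegral.integral_sub (intervalIntegrable_sin_pow _ _ _)
    (intervalIntegrable_sin_pow _ _ _)]
  refine integral_mono_on (by positivity) (intervalIntegrable_neg_log_sin_mul_sin_pow _ _ _)
    ((intervalIntegrable_sin_pow _ _ _).sub (intervalIntegrable_sin_pow _ _ _)) fun θ hθ => ?_
  have hsin := sin_nonneg_of_mem_Icc_zero_pi_div_two hθ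
  calc -log (sin θ) * sin θ ^ (n + 1) = (-log (sin θ) * sin θ) * sin θ ^ n := by ring
    _ ≤ (1 - sin θ) * sin θ ^ n :=
      mul_le_mul_of_nonneg_right (neg_log_mul_self_le_one_sub hsin) (pow_nonneg hsin n)
    _ = sin θ ^ n - sin θ ^ (n + 1) := by ring

lemma mul_integral_neg_log_sin_mul_sin_pow_le (n : ℕ) :
    (n + 2) * ∫ θ in (0:ℝ)..(π / 2), -log (sin θ) * sin θ ^ n ≤ 2 * wallis n := by
  match n with
  | 0 =>
    rw [integral_neg_log_sin_mul_sin_pow_zero, wallis_zero]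
    nlinarith [log_two_lt_d9, pi_pos]
  | 1 =>
    have h := integral_neg_log_sin_mul_sin_pow_succ_le 0
    rw [wallis_zero, wallis_one] at h
    rw [wallis_one]
    push_cast
    linarith [pi_lt_d2]
  | k + 2 =>
    set I := ∫ θ in (0:ℝ)..(π / 2), -log (sin θ) * sin θ ^ (k + 2)
    have hI : I ≤ wallis (k + 1) - wallis (k + 2) :=
      integral_neg_log_sin_mul_sin_pow_succ_le (k + 1)
    have hW := mul_wallis_le_mul_wallis_succ (k + 1)
    have hgap := sub_nonneg.2 (wallis_succ_le (k + 1))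
    push_cast at hW ⊢
    calc (k + 2 + 2) * I ≤ (k + 4) * (wallis (k + 1) - wallis (k + 2)) := by
          rw [show (k:ℝ) + 2 + 2 = k + 4 by ring]; gcongr
      _ ≤ 2 * ((k + 2) * (wallis (k + 1) - wallis (k + 2))) := by nlinarith
      _ ≤ 2 * wallis (k + 2) := by linarith

/-- The expected log progress of the hit-and-run algorithm on the sphere in dimension
`d ≥ 2` is at most `1/d`. -/
theorem hit_and_run_progress (d : ℕ) (hd : 2 ≤ d) :
    (1 / (2 * wallis (d - 2))) *
      ∫ θ in (0:ℝ)..(Real.pi / 2), (-Real.log (Real.sin θ)) * Real.sin θ ^ (d - 2) ≤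
    1 / d := by
  obtain ⟨n, rfl⟩ := Nat.exists_eq_add_of_le' hd
  have hW := wallis_pos n
  have hkey := mul_integral_neg_log_sin_mul_sin_pow_le n
  rw [Nat.add_sub_cancel, one_div_mul_eq_div, div_le_div_iff₀ (by positivity) (by positivity)]
  push_cast
  linarith
end
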